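/- arXiv:0710.4903 — 4 statements merged into one kernel-verified Lean document; each statement's English description precedes it below -/
import Mathlib

section
/- For constants C_S, C_B, Δ > 0 with C_S ≠ C_B, the function f_e(C_S, C_B) = (C_B − C_S)/(C_B·e^{−Δ(C_S−C_B)} − C_S) satisfies 0 < f_e(C_S, C_B) < 1. -/
open Real

/-! Writing `d = C_B - C_S`, the denominator is `C_B (e^{Δ d} - 1) + d`, and `C_B (e^{Δ d} - 1)`
has the same sign as `d`. A quotient `d / (a + d)` with `a` and `d` of the same sign lies
strictly between `0` and `1`. -/

lemma div_add_self_mem_Ioo {a d : ℝ} (h : 0 < a * d) : d / (a + d) ∈ Set.Ioo 0 1 := by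
  have hd : d ≠ 0 := by rintro rfl; simp at h
  have hd2 : 0 < d ^ 2 := by positivity
  rw [show d / (a + d) = d ^ 2 / (a * d + d ^ 2) by
    rw [← mul_div_mul_right d (a + d) hd]; ring_nf]
  exact ⟨by positivity, (div_lt_one (by positivity)).2 (by linarith)⟩

lemma Real.exp_sub_one_mul_self_pos {t : ℝ} (ht : t ≠ 0) : 0 < (exp t - 1) * t := by
  rcases ht.lt_or_gt with ht | ht
  · exact mul_pos_of_neg_of_neg (by linarith [exp_lt_one_iff.2 ht]) ht
  · exact mul_pos (by linarith [one_lt_exp_iff.2 ht]) ht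

lemma Real.exp_mul_sub_one_mul_pos {c t : ℝ} (hc : 0 < c) (ht : t ≠ 0) :
    0 < (exp (c * t) - 1) * t := by
  have := exp_sub_one_mul_self_pos (mul_ne_zero hc.ne' ht)
  rw [mul_left_comm] at this
  exact pos_of_mul_pos_right this hc.le

theorem bgm_loss_fraction_pos_lt_one_general (CS CB Δ : ℝ)
    (hCB : 0 < CB) (hΔ : 0 < Δ) (hne : CS ≠ CB) :
    0 < (CB - CS) / (CB * Real.exp (-Δ * (CS - CB)) - CS) ∧
      (CB - CS) / (CB * Real.exp (-Δ * (CS - CB)) - CS) < 1 := by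
  have hsign : 0 < CB * (exp (Δ * (CB - CS)) - 1) * (CB - CS) := by
    rw [mul_assoc]
    exact mul_pos hCB (exp_mul_sub_one_mul_pos hΔ (sub_ne_zero.2 hne.symm))
  have hden : CB * exp (-Δ * (CS - CB)) - CS = CB * (exp (Δ * (CB - CS)) - 1) + (CB - CS) := by
    ring_nf
  rw [hden]
  exact div_add_self_mem_Ioo hsign

/-- The BGM packet-loss fraction `f_e(C_S, C_B) = (C_B − C_S)/(C_B·e^{−Δ(C_S−C_B)} − C_S)`
is strictly between 0 and 1 for positive rates `C_S ≠ C_B` and positive delay `Δ`. -/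
theorem bgm_loss_fraction_pos_lt_one (CS CB Δ : ℝ)
    (hCS : 0 < CS) (hCB : 0 < CB) (hΔ : 0 < Δ) (hne : CS ≠ CB) :
    0 < (CB - CS) / (CB * Real.exp (-Δ * (CS - CB)) - CS) ∧
      (CB - CS) / (CB * Real.exp (-Δ * (CS - CB)) - CS) < 1 :=
  bgm_loss_fraction_pos_lt_one_general CS CB Δ hCB hΔ hne
end

section
/- For fixed C_S, C_B > 0 with C_S > C_B, the achievable relay rate λ(Δ) = C_S·(1 − f_e(Δ)) with f_e(Δ) = (C_B − C_S)/(C_B·e^{−Δ(C_S−C_B)} − C_S) converges to C_B as Δ → ∞. Combined with the C_S < C_B case and the C_S = C_B case (where f_e = 1/(1+C_S·Δ)), in all cases λ(Δ) → min{C_S, C_B} as Δ → ∞. -/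
open Real Filter

open Topology

/-!
Write `f_e(Δ) = (C_B − C_S) / (C_B e^{−Δ(C_S − C_B)} − C_S)`. If `C_B < C_S` the exponential
decays, so `f_e → (C_S − C_B) / C_S` and `C_S (1 − f_e) → C_B`. If `C_S < C_B` it blows up, so
`f_e → 0` and `C_S (1 − f_e) → C_S`; likewise `1 / (1 + C_S Δ) → 0` when `C_S = C_B`.
-/

section RelayRate

variable {CS CB : ℝ}

theorem tendsto_relay_rate_of_lt (hCS : CS ≠ 0) (h : CB < CS) :
    Tendsto (fun Δ : ℝ => CS * (1 - (CB - CS) / (CB * exp (-Δ * (CS - CB)) - CS)))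
      atTop (𝓝 CB) := by
  have hexp : Tendsto (fun Δ : ℝ => exp (-Δ * (CS - CB))) atTop (𝓝 0) := by
    refine tendsto_exp_atBot.comp ?_
    simpa only [id, neg_mul, ← mul_neg, neg_sub] using
      tendsto_id.atTop_mul_const_of_neg (sub_neg.2 h)
  have hden : Tendsto (fun Δ : ℝ => CB * exp (-Δ * (CS - CB)) - CS) atTop (𝓝 (-CS)) := by
    simpa using (hexp.const_mul CB).sub_const CS
  have hlim :=
    (((tendsto_const_nhds (x := CB - CS)).div hden (neg_ne_zero.2 hCS)).const_sub 1).const_mul CS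
  rwa [show CS * (1 - (CB - CS) / -CS) = CB by field_simp; ring] at hlim

theorem tendsto_relay_rate_of_gt (hCS : 0 < CS) (h : CS < CB) :
    Tendsto (fun Δ : ℝ => CS * (1 - (CB - CS) / (CB * exp (-Δ * (CS - CB)) - CS)))
      atTop (𝓝 CS) := by
  have hexp : Tendsto (fun Δ : ℝ => exp (-Δ * (CS - CB))) atTop atTop := by
    refine tendsto_exp_atTop.comp ?_
    simpa only [id, neg_mul, ← mul_neg, neg_sub] using tendsto_id.atTop_mul_const (sub_pos.2 h)
  have hden : Tendsto (fun Δ : ℝ => CB * exp (-Δ * (CS - CB)) - CS) atTop atTop :=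
    tendsto_atTop_add_const_right _ (-CS) (hexp.const_mul_atTop (hCS.trans h))
  simpa using (((tendsto_const_nhds (x := CB - CS)).div_atTop hden).const_sub 1).const_mul CS

theorem tendsto_relay_rate_of_eq (hCS : 0 < CS) :
    Tendsto (fun Δ : ℝ => CS * (1 - 1 / (1 + CS * Δ))) atTop (𝓝 CS) := by
  have hden : Tendsto (fun Δ : ℝ => 1 + CS * Δ) atTop atTop :=
    tendsto_atTop_add_const_left _ 1 (tendsto_id.const_mul_atTop hCS)
  simpa using (((tendsto_const_nhds (x := (1 : ℝ))).div_atTop hden).const_sub 1).const_mul CS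

end RelayRate

theorem bgm_relay_rate_tendsto_min_general (CS CB : ℝ) (hCS : 0 < CS) :
    (CB < CS →
      Tendsto (fun Δ : ℝ =>
          CS * (1 - (CB - CS) / (CB * Real.exp (-Δ * (CS - CB)) - CS)))
        atTop (nhds CB)) ∧
    Tendsto (fun Δ : ℝ =>
        CS * (1 - if CS = CB then 1 / (1 + CS * Δ)
                  else (CB - CS) / (CB * Real.exp (-Δ * (CS - CB)) - CS)))
      atTop (nhds (min CS CB)) := by
  refine ⟨tendsto_relay_rate_of_lt hCS.ne', ?_⟩
  rcases lt_trichotomy CS CB with hlt | rfl | hgt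
  · simpa only [if_neg hlt.ne, min_eq_left hlt.le] using tendsto_relay_rate_of_gt hCS hlt
  · simpa only [if_true, min_self] using tendsto_relay_rate_of_eq hCS
  · simpa only [if_neg hgt.ne', min_eq_right hgt.le] using tendsto_relay_rate_of_lt hCS.ne' hgt

/-- The achievable BGM relay rate `λ(Δ) = C_S (1 − f_e(Δ))` converges to `C_B` as `Δ → ∞`
when `C_S > C_B`, and in all cases (`f_e = 1/(1 + C_S Δ)` when `C_S = C_B`) converges to
`min{C_S, C_B}`. -/
theorem bgm_relay_rate_tendsto_min (CS CB : ℝ) (hCS : 0 < CS) (hCB : 0 < CB) :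
    (CB < CS →
      Tendsto (fun Δ : ℝ =>
          CS * (1 - (CB - CS) / (CB * Real.exp (-Δ * (CS - CB)) - CS)))
        atTop (nhds CB)) ∧
    Tendsto (fun Δ : ℝ =>
        CS * (1 - if CS = CB then 1 / (1 + CS * Δ)
                  else (CB - CS) / (CB * Real.exp (-Δ * (CS - CB)) - CS)))
      atTop (nhds (min CS CB)) :=
  bgm_relay_rate_tendsto_min_general CS CB hCS
end

section
/- For C_S < C_B, the mean delay function m(Δ*) defined as [1 + e^{Δ*(C_S−C_B)}·(Δ*(C_S−C_B) − 1)]/[(C_B−C_S)·(1 − e^{Δ*(C_S−C_B)})] is continuous and strictly increasing in Δ* on (0, ∞), with range (0, 1/(C_B−C_S)); hence for every average-delay target Δ̄ ∈ (0, 1/(C_B−C_S)) there exists a unique Δ* > 0 with m(Δ*) = Δ̄. -/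
/-!
With `c = C_B - C_S` and `x = c Δ`, the mean delay is `(1 - x / (eˣ - 1)) / c`. Here
`(eˣ - 1) / x` is the secant slope of `exp` through `0`, which by strict convexity of `exp`
increases strictly on `(0, ∞)` from `exp' 0 = 1` to `∞`. Hence the mean delay increases
strictly from `0` to `1 / c`, and the intermediate value theorem gives every value in between.
-/

open Real Set

noncomputable def meanDelay (CS CB Δ : ℝ) : ℝ :=
  (1 + Real.exp (Δ * (CS - CB)) * (Δ * (CS - CB) - 1)) /
    ((CB - CS) * (1 - Real.exp (Δ * (CS - CB))))

open Filter Topology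

lemma one_lt_slope_exp_zero {x : ℝ} (hx : 0 < x) : 1 < slope exp 0 x := by
  rw [slope_def_field, sub_zero, exp_zero, one_lt_div hx]
  linarith [add_one_lt_exp hx.ne']

lemma strictMonoOn_slope_exp_zero : StrictMonoOn (slope exp 0) (Ioi 0) := by
  intro x hx y hy hxy
  simpa only [slope_def_field] using
    strictConvexOn_exp.secant_strict_mono (mem_univ 0) (mem_univ x) (mem_univ y)
      (ne_of_gt hx) (ne_of_gt hy) hxy

lemma tendsto_slope_exp_zero_nhdsGT : Tendsto (slope exp 0) (𝓝[>] 0) (𝓝 1) := by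
  simpa only [exp_zero] using
    (hasDerivAt_exp 0).tendsto_slope.mono_left (nhdsGT_le_nhdsNE 0)

lemma tendsto_slope_exp_zero_atTop : Tendsto (slope exp 0) atTop atTop := by
  refine tendsto_atTop_mono' atTop ?_ (tendsto_id.atTop_div_const (two_pos : (0 : ℝ) < 2))
  filter_upwards [eventually_gt_atTop 0] with x hx
  rw [slope_def_field, sub_zero, exp_zero, id, le_div_iff₀ hx]
  nlinarith [quadratic_le_exp_of_nonneg hx.le]

section

variable {CS CB : ℝ}

lemma meanDelay_eq_slope {Δ : ℝ} (hx : (CB - CS) * Δ ≠ 0) :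
    meanDelay CS CB Δ = (1 - (slope exp 0 ((CB - CS) * Δ))⁻¹) / (CB - CS) := by
  have hc : CB - CS ≠ 0 := left_ne_zero_of_mul hx
  have he : exp ((CB - CS) * Δ) - 1 ≠ 0 := sub_ne_zero.2 (mt (exp_eq_one_iff _).1 hx)
  have hneg : Δ * (CS - CB) = -((CB - CS) * Δ) := by ring
  rw [meanDelay, hneg, exp_neg, slope_def_field, sub_zero, exp_zero]
  field_simp
  ring

lemma meanDelay_mem_Ioo (hlt : CS < CB) {Δ : ℝ} (hΔ : 0 < Δ) :
    meanDelay CS CB Δ ∈ Ioo 0 (1 / (CB - CS)) := by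
  have hc : 0 < CB - CS := sub_pos.2 hlt
  have hslope := one_lt_slope_exp_zero (mul_pos hc hΔ)
  rw [meanDelay_eq_slope (mul_pos hc hΔ).ne']
  refine ⟨div_pos (sub_pos.2 (inv_lt_one_of_one_lt₀ hslope)) hc, ?_⟩
  gcongr
  linarith [inv_pos.2 (zero_lt_one.trans hslope)]

lemma continuousOn_meanDelay (hlt : CS < CB) : ContinuousOn (meanDelay CS CB) (Ioi 0) := by
  refine ContinuousOn.div (by fun_prop) (by fun_prop) fun Δ hΔ => ?_
  have hu : Δ * (CS - CB) < 0 := mul_neg_of_pos_of_neg hΔ (sub_neg.2 hlt)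
  exact mul_ne_zero (sub_ne_zero.2 hlt.ne') (sub_ne_zero.2 (Real.exp_lt_one_iff.2 hu).ne')

lemma strictMonoOn_meanDelay (hlt : CS < CB) : StrictMonoOn (meanDelay CS CB) (Ioi 0) := by
  intro a ha b hb hab
  have hc : 0 < CB - CS := sub_pos.2 hlt
  have hca : 0 < (CB - CS) * a := mul_pos hc ha
  have hcb : 0 < (CB - CS) * b := mul_pos hc hb
  rw [meanDelay_eq_slope hca.ne', meanDelay_eq_slope hcb.ne']
  have hslope : slope exp 0 ((CB - CS) * a) < slope exp 0 ((CB - CS) * b) :=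
    strictMonoOn_slope_exp_zero hca hcb (mul_lt_mul_of_pos_left hab hc)
  gcongr
  exact zero_lt_one.trans (one_lt_slope_exp_zero hca)

lemma meanDelay_eventuallyEq_slope (hlt : CS < CB) {l : Filter ℝ} (hl : l ≤ 𝓟 (Ioi 0)) :
    meanDelay CS CB =ᶠ[l] fun Δ => (1 - (slope exp 0 ((CB - CS) * Δ))⁻¹) / (CB - CS) := by
  filter_upwards [le_principal_iff.1 hl] with Δ hΔ
  exact meanDelay_eq_slope (mul_pos (sub_pos.2 hlt) hΔ).ne'

lemma tendsto_meanDelay_nhdsGT (hlt : CS < CB) :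
    Tendsto (meanDelay CS CB) (𝓝[>] 0) (𝓝 0) := by
  have hc : 0 < CB - CS := sub_pos.2 hlt
  have hmul : Tendsto (fun Δ => (CB - CS) * Δ) (𝓝[>] 0) (𝓝[>] 0) :=
    tendsto_comap.mono_left (comap_mulLeft_nhdsGT_zero hc).ge
  have h := (((tendsto_slope_exp_zero_nhdsGT.comp hmul).inv₀ one_ne_zero).const_sub 1).div_const
    (CB - CS)
  rw [inv_one, sub_self, zero_div] at h
  exact h.congr' (meanDelay_eventuallyEq_slope hlt (le_principal_iff.2 self_mem_nhdsWithin)).symm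

lemma tendsto_meanDelay_atTop (hlt : CS < CB) :
    Tendsto (meanDelay CS CB) atTop (𝓝 (1 / (CB - CS))) := by
  have hmul : Tendsto (fun Δ => (CB - CS) * Δ) atTop atTop :=
    tendsto_id.const_mul_atTop (sub_pos.2 hlt)
  have h := ((tendsto_inv_atTop_zero.comp (tendsto_slope_exp_zero_atTop.comp hmul)).const_sub
    1).div_const (CB - CS)
  rw [sub_zero] at h
  exact h.congr' (meanDelay_eventuallyEq_slope hlt (le_principal_iff.2 (Ioi_mem_atTop 0))).symm

end

theorem bgm_mean_delay_bijective_general (CS CB : ℝ) (hlt : CS < CB) :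
    ContinuousOn (meanDelay CS CB) (Ioi 0) ∧
    StrictMonoOn (meanDelay CS CB) (Ioi 0) ∧
    meanDelay CS CB '' (Ioi 0) = Ioo 0 (1 / (CB - CS)) ∧
    ∀ Δbar ∈ Ioo (0 : ℝ) (1 / (CB - CS)),
      ∃! Δstar : ℝ, Δstar ∈ Ioi (0 : ℝ) ∧ meanDelay CS CB Δstar = Δbar := by
  have hcont := continuousOn_meanDelay hlt
  have hmono := strictMonoOn_meanDelay hlt
  have himage : meanDelay CS CB '' (Ioi 0) = Ioo 0 (1 / (CB - CS)) :=
    Subset.antisymm (image_subset_iff.2 fun _ => meanDelay_mem_Ioo hlt)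
      (isPreconnected_Ioi.intermediate_value_Ioo (le_principal_iff.2 self_mem_nhdsWithin)
        (le_principal_iff.2 (Ioi_mem_atTop 0)) hcont
        (tendsto_meanDelay_nhdsGT hlt) (tendsto_meanDelay_atTop hlt))
  refine ⟨hcont, hmono, himage, fun Δbar hΔbar => ?_⟩
  obtain ⟨Δ, hΔ, rfl⟩ := himage ▸ hΔbar
  exact ⟨Δ, ⟨hΔ, rfl⟩, fun Δ' ⟨hΔ', hΔ'eq⟩ => hmono.injOn hΔ' hΔ hΔ'eq⟩

/-- For `0 < C_S < C_B`, the mean delay `m(Δ*)` is continuous and strictly increasing on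
`(0, ∞)` with range `(0, 1/(C_B−C_S))`; hence every average-delay target
`Δ̄ ∈ (0, 1/(C_B−C_S))` is attained at a unique strict-delay constraint `Δ* > 0`. -/
theorem bgm_mean_delay_bijective (CS CB : ℝ) (hCS : 0 < CS) (hlt : CS < CB) :
    ContinuousOn (meanDelay CS CB) (Ioi 0) ∧
    StrictMonoOn (meanDelay CS CB) (Ioi 0) ∧
    meanDelay CS CB '' (Ioi 0) = Ioo 0 (1 / (CB - CS)) ∧
    ∀ Δbar ∈ Ioo (0 : ℝ) (1 / (CB - CS)),
      ∃! Δstar : ℝ, Δstar ∈ Ioi (0 : ℝ) ∧ meanDelay CS CB Δstar = Δbar :=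
  bgm_mean_delay_bijective_general CS CB hlt
end

section
/- For fixed C_S, C_B > 0 with C_S < C_B, the achievable relay rate λ(Δ) = C_S·(1 − f_e(Δ)) where f_e(Δ) = (C_B − C_S)/(C_B·e^{Δ(C_B−C_S)} − C_S) is a concave function of Δ on (0,∞); equivalently, the loss C_S·f_e(Δ) is convex in Δ. -/
/-!
With `a = C_B - C_S`, the loss is `C_S a · φ(a Δ)` for `φ x = (C_B eˣ - C_S)⁻¹`. For
`D = b eˣ - c` one has `D' = D'' = b eˣ`, hence `φ'' = b eˣ (b eˣ + c) / D³ ≥ 0` wherever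
`D > 0` and `c ≥ 0`. Convexity survives the linear change of variable and the positive factor,
and the rate is `C_S` minus the loss.
-/

open Real Set

lemma hasDerivAt_inv_mul_exp_sub (b c x : ℝ) (hx : b * exp x - c ≠ 0) :
    HasDerivAt (fun y => (b * exp y - c)⁻¹) (-(b * exp x) / (b * exp x - c) ^ 2) x :=
  (((hasDerivAt_exp x).const_mul b).sub_const c).inv hx

lemma hasDerivAt_neg_mul_exp_div_sq (b c x : ℝ) (hx : b * exp x - c ≠ 0) :
    HasDerivAt (fun y => -(b * exp y) / (b * exp y - c) ^ 2)
      (b * exp x * (b * exp x + c) / (b * exp x - c) ^ 3) x := by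
  have hexp := (hasDerivAt_exp x).const_mul b
  refine (hexp.fun_neg.fun_div ((hexp.sub_const c).fun_pow 2) (pow_ne_zero 2 hx)).congr_deriv ?_
  field_simp
  ring

lemma convexOn_inv_mul_exp_sub {b c : ℝ} (hc : 0 ≤ c) :
    ConvexOn ℝ {x | c < b * exp x} (fun x => (b * exp x - c)⁻¹) := by
  have hconvex : Convex ℝ {x | c < b * exp x} := by
    refine Set.OrdConnected.convex ⟨fun x (hx : c < b * exp x) y _ z hz => ?_⟩
    have hb : 0 < b := pos_of_mul_pos_left (hc.trans_lt hx) (exp_pos x).le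
    exact hx.trans_le (by gcongr; exact hz.1)
  have hpos : ∀ x ∈ interior {x | c < b * exp x}, 0 < b * exp x - c := by
    rw [(isOpen_lt continuous_const (by fun_prop)).interior_eq]
    exact fun x hx => sub_pos.2 hx
  refine convexOn_of_hasDerivWithinAt2_nonneg hconvex
    (fun x hx =>
      (hasDerivAt_inv_mul_exp_sub b c x (sub_pos.2 hx).ne').continuousAt.continuousWithinAt)
    (fun x hx => (hasDerivAt_inv_mul_exp_sub b c x (hpos x hx).ne').hasDerivWithinAt)
    (fun x hx => (hasDerivAt_neg_mul_exp_div_sq b c x (hpos x hx).ne').hasDerivWithinAt)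
    (fun x hx => ?_)
  have hD := hpos x hx
  exact div_nonneg (mul_nonneg (by linarith) (by linarith)) (pow_pos hD 3).le

/-- For `0 < C_S < C_B`, the BGM relay rate `λ(Δ) = C_S(1 − f_e(Δ))` with
`f_e(Δ) = (C_B − C_S)/(C_B e^{Δ(C_B−C_S)} − C_S)` is concave in `Δ` on `(0,∞)`;
equivalently, the loss `C_S · f_e(Δ)` is convex in `Δ`. -/
theorem bgm_relay_rate_concave (CS CB : ℝ) (hCS : 0 < CS) (hlt : CS < CB) :
    ConcaveOn ℝ (Ioi 0)
      (fun Δ : ℝ => CS * (1 - (CB - CS) / (CB * Real.exp (Δ * (CB - CS)) - CS))) ∧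
    ConvexOn ℝ (Ioi 0)
      (fun Δ : ℝ => CS * ((CB - CS) / (CB * Real.exp (Δ * (CB - CS)) - CS))) := by
  have hloss : ConvexOn ℝ (Ioi 0)
      (fun Δ : ℝ => CS * ((CB - CS) / (CB * Real.exp (Δ * (CB - CS)) - CS))) := by
    have hrescaled := (convexOn_inv_mul_exp_sub (b := CB) hCS.le).comp_linearMap
      (LinearMap.mulRight ℝ (CB - CS))
    have hsub : Ioi (0 : ℝ) ⊆ _ := fun Δ (hΔ : 0 < Δ) =>
      show CS < CB * exp (Δ * (CB - CS)) from
        hlt.trans_le (le_mul_of_one_le_right (hCS.trans hlt).le (one_le_exp (by nlinarith)))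
    refine ((hrescaled.subset hsub (convex_Ioi 0)).smul
      (by nlinarith : 0 ≤ CS * (CB - CS))).congr fun Δ _ => ?_
    simp only [Function.comp_apply, LinearMap.mulRight_apply, smul_eq_mul]
    ring
  refine ⟨(hloss.neg.add_const CS).congr fun Δ _ => ?_, hloss⟩
  simp only [Pi.add_apply, Pi.neg_apply]
  ring
end
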